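/- Let (X,d_X) be a compact connected geodesic space with finite Reeb graph G of d = d_X(r,·). Let p, p' ∈ G and let δ : [d_*(p), d_*(p')] → G be a strictly increasing path (with respect to d_*) from p to p' whose interior contains no merging vertex. Then for any x' ∈ π^{-1}(p') lying in the closure of π^{-1}(δ((d_*(p), d_*(p')))), there exists a shortest path γ in X from some point x ∈ π^{-1}(p) to x' with π(γ) = δ and d_X(x,x') = d(x') − d(x) = d_G(p,p'). -/

import Mathlib

open Set Metric

noncomputable section

/-- A finite metric graph structure on a metric space `G`: a finite set of edges, each
isometrically parametrized by arc length on `[0, len e]`, covering `G`, with pairwise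
disjoint open edges, and such that the metric of `G` is the associated shortest-path
metric (i.e. the largest pseudometric making all edge parametrizations 1-Lipschitz). -/
structure MetricGraphStruct (G : Type*) [MetricSpace G] where
  /-- the (finite) index type of edges -/
  E : Type
  fintypeE : Fintype E
  /-- length of each edge -/
  len : E → ℝ
  len_pos : ∀ e, 0 < len e
  /-- arc-length parametrization of each edge on `[0, len e]` -/
  param : E → ℝ → G
  param_lipschitz : ∀ e, LipschitzOnWith 1 (param e) (Set.Icc 0 (len e))
  /-- the edges cover `G` -/
  cover : ∀ x : G, ∃ e, ∃ t ∈ Set.Icc 0 (len e), param e t = x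
  /-- each open edge is simple -/
  injOn : ∀ e, Set.InjOn (param e) (Set.Ioo 0 (len e))
  /-- open edges are pairwise disjoint -/
  disjoint_interiors : ∀ e₁ e₂, e₁ ≠ e₂ → ∀ s ∈ Set.Ioo 0 (len e₁), ∀ t ∈ Set.Ioo 0 (len e₂),
    param e₁ s ≠ param e₂ t
  /-- endpoints of edges do not lie in open edges -/
  endpoint_not_interior : ∀ e e', ∀ t ∈ Set.Ioo 0 (len e'),
    param e 0 ≠ param e' t ∧ param e (len e) ≠ param e' t
  /-- the metric of `G` is the shortest-path metric: it is maximal among pseudometrics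
  making every edge parametrization 1-Lipschitz -/
  dist_maximal : ∀ δ : G → G → ℝ, (∀ p, δ p p = 0) → (∀ p q, δ p q = δ q p) →
    (∀ p q s, δ p s ≤ δ p q + δ q s) →
    (∀ e, ∀ s ∈ Set.Icc 0 (len e), ∀ t ∈ Set.Icc 0 (len e),
      δ (param e s) (param e t) ≤ |s - t|) →
    ∀ p q, δ p q ≤ dist p q

namespace MetricGraphStruct

variable {G : Type*} [MetricSpace G] (M : MetricGraphStruct G)

/-- first endpoint of an edge -/
def src (e : M.E) : G := M.param e 0

/-- second endpoint of an edge -/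
def tgt (e : M.E) : G := M.param e (M.len e)

/-- the set of vertices (endpoints of edges) -/
def vertexSet : Set G := {v | ∃ e, v = M.src e ∨ v = M.tgt e}

/-- `N_E(α)`: the number of edges of length at most `α` -/
def NE (α : ℝ) : ℕ := Nat.card {e : M.E // M.len e ≤ α}

/-- the first Betti number of a connected finite graph: `#E - #V + 1` -/
def betti1 : ℕ := Nat.card M.E + 1 - Nat.card M.vertexSet

end MetricGraphStruct

end

/-- A geodesic metric space: any two points are joined by an isometrically embedded
segment. -/
def IsGeodesicSpace (X : Type*) [MetricSpace X] : Prop :=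
  ∀ x y : X, ∃ γ : ℝ → X, γ 0 = x ∧ γ (dist x y) = y ∧
    ∀ s ∈ Set.Icc 0 (dist x y), ∀ t ∈ Set.Icc 0 (dist x y), dist (γ s) (γ t) = |s - t|

/-- The Reeb relation of the distance function `d = d_X(r, ·)`: two points are related if
they have the same distance to `r` and lie in the same path-connected component of the
corresponding level set of `d`. -/
def reebRel {X : Type*} [MetricSpace X] (r : X) (x y : X) : Prop :=
  dist r x = dist r y ∧ JoinedIn {z | dist r z = dist r x} x y

/-- `G` is the metric Reeb graph of the distance function `d = d_X(r, ·)` on `X`: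
`π : X → G` is the (continuous, surjective) quotient map of the Reeb relation, `d`
factors as `d_* ∘ π`, and `G` carries a finite metric graph structure whose edges are
parametrized so that `d_*` increases at unit speed along each edge (hence each edge has
length the variation of `d_*` along it), the metric on `G` being the associated
shortest-path metric. -/
structure ReebGraphOf (X : Type*) [MetricSpace X] (r : X)
    (G : Type*) [MetricSpace G] where
  /-- the finite metric graph structure on `G` -/
  graph : MetricGraphStruct G
  /-- the quotient map -/
  π : X → G
  continuous_π : Continuous π
  surj : Function.Surjective π
  /-- `π` identifies exactly the points equivalent under the Reeb relation -/
  eq_iff : ∀ x y : X, π x = π y ↔ reebRel r x y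
  /-- the function induced by `d` on the quotient -/
  dStar : G → ℝ
  dStar_π : ∀ x : X, dStar (π x) = dist r x
  /-- `d_*` increases at unit speed along each (oriented) edge -/
  dStar_param : ∀ e : graph.E, ∀ t ∈ Set.Icc 0 (graph.len e),
    dStar (graph.param e t) = dStar (graph.param e 0) + t

namespace ReebGraphOf

variable {X : Type*} [MetricSpace X] {r : X} {G : Type*} [MetricSpace G]

/-- A merging vertex: a point of `G` which is the terminal endpoint of at least two
distinct edges (edges being oriented by increasing `d_*`). -/
def IsMergingVertex (R : ReebGraphOf X r G) (v : G) : Prop :=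
  ∃ e₁ e₂ : R.graph.E, e₁ ≠ e₂ ∧ R.graph.tgt e₁ = v ∧ R.graph.tgt e₂ = v

/-- `M`: the supremum of the diameters of the fibers of `π`. -/
noncomputable def fiberDiamSup (R : ReebGraphOf X r G) : ℝ := ⨆ p : G, Metric.diam (R.π ⁻¹' {p})

end ReebGraphOf

/-! A geodesic of `X` issuing from `r` projects to a path of `G` along which `d_*` grows at unit
speed. Such paths are determined downward from their upper endpoint as long as they avoid merging
vertices, because just below a non-merging point `q` every level of `d_*` near `q` meets `G` in a
single point (the one on the unique edge arriving at `q`). Hence geodesics from `r` to points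
`x_n → x'` lying over `δ` project onto `δ`, and a pointwise limit of them along an ultrafilter,
which exists by compactness of `X`, is the required lift. Its length `d_*(p') - d_*(p)` equals
`d_G(p, p')` since `d_G` dominates `|d_* - d_*|` and is dominated by the length of `δ`. -/

open Filter Topology

theorem IsClosed.Icc_subset_of_forall_mem_nhdsLT {α : Type*} [ConditionallyCompleteLinearOrder α]
    [TopologicalSpace α] [OrderTopology α] [DenselyOrdered α] {a b : α} {s : Set α}
    (hs : IsClosed (s ∩ Icc a b)) (hb : b ∈ s) (hlt : ∀ x ∈ s ∩ Ioc a b, s ∈ 𝓝[<] x) :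
    Icc a b ⊆ s :=
  hs.Icc_subset_of_forall_exists_lt hb fun x hx y hy =>
    have := nhdsLT_neBot_of_exists_lt ⟨y, hy⟩
    nonempty_of_mem (inter_mem (hlt x hx) (Ico_mem_nhdsLT hy))

theorem exists_limit_of_isometric_segments {X ι : Type*} [MetricSpace X] [CompactSpace X]
    {l : Filter ι} [l.NeBot] {σ : ι → ℝ → X} {ℓ : ι → ℝ} {b : ℝ} {x : X}
    (hℓ0 : ∀ n, 0 ≤ ℓ n) (hℓb : ∀ n, ℓ n ≤ b) (hℓ : Tendsto ℓ l (𝓝 b))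
    (hσ : ∀ n, ∀ s ∈ Icc 0 (ℓ n), ∀ t ∈ Icc 0 (ℓ n), dist (σ n s) (σ n t) = |s - t|)
    (hx : Tendsto (fun n => σ n (ℓ n)) l (𝓝 x)) :
    ∃ γ : ℝ → X, γ b = x ∧
      (∀ s ∈ Icc 0 b, ∀ t ∈ Icc 0 b, dist (γ s) (γ t) = |s - t|) ∧
      ∀ t ∈ Ico 0 b, ∀ C : Set X, IsClosed C → (∀ᶠ n in l, σ n t ∈ C) → γ t ∈ C := by
  set L := Ultrafilter.of l
  have hL : ↑L ≤ l := Ultrafilter.of_le l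
  -- clamped so that `σ n` is only evaluated where it is isometric
  set f : ℝ → ι → X := fun t n => σ n (min t (ℓ n))
  have hlim : ∀ t, ∃ y, Tendsto (f t) L (𝓝 y) := fun t =>
    let ⟨y, _, hy⟩ := isCompact_univ.ultrafilter_le_nhds (L.map (f t)) (by simp)
    ⟨y, hy⟩
  choose γ hγ using hlim
  have hmin : ∀ t ∈ Icc 0 b, Tendsto (fun n => min t (ℓ n)) L (𝓝 t) := fun t ht => by
    simpa [min_eq_left ht.2] using (tendsto_const_nhds (x := t)).min (hℓ.mono_left hL)
  have hmem : ∀ t, 0 ≤ t → ∀ n, min t (ℓ n) ∈ Icc 0 (ℓ n) := fun t ht n =>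
    ⟨le_min ht (hℓ0 n), min_le_right _ _⟩
  refine ⟨γ, ?_, fun s hs t ht => ?_, fun t ht C hC hev => ?_⟩
  · have hfb : f b = fun n => σ n (ℓ n) := funext fun n => by simp [f, min_eq_right (hℓb n)]
    exact tendsto_nhds_unique (hfb ▸ hγ b) (hx.mono_left hL)
  · refine tendsto_nhds_unique ((hγ s).dist (hγ t)) ?_
    exact ((hmin s hs).sub (hmin t ht)).abs.congr fun n =>
      (hσ n _ (hmem s hs.1 n) _ (hmem t ht.1 n)).symm
  · refine hC.mem_of_tendsto (hγ t) ?_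
    filter_upwards [hL hev, hL (hℓ.eventually (lt_mem_nhds ht.2))] with n hn hlt
    simpa [f, min_eq_left hlt.le] using hn

namespace MetricGraphStruct

variable {G : Type*} [MetricSpace G] (M : MetricGraphStruct G)

theorem isClosed_image_param (e : M.E) : IsClosed (M.param e '' Icc 0 (M.len e)) :=
  (isCompact_Icc.image_of_continuousOn (M.param_lipschitz e).continuousOn).isClosed

theorem eventually_exists_edge_through (q : G) :
    ∀ᶠ z in 𝓝 q, ∃ e, z ∈ M.param e '' Icc 0 (M.len e) ∧ q ∈ M.param e '' Icc 0 (M.len e) := by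
  have := M.fintypeE
  have hnear : ∀ᶠ z in 𝓝 q, ∀ e,
      z ∈ M.param e '' Icc 0 (M.len e) → q ∈ M.param e '' Icc 0 (M.len e) := by
    refine eventually_all.2 fun e => ?_
    by_cases hq : q ∈ M.param e '' Icc 0 (M.len e)
    · exact .of_forall fun _ _ => hq
    · filter_upwards [(M.isClosed_image_param e).isOpen_compl.mem_nhds hq] with z hz h
        using (hz h).elim
  filter_upwards [hnear] with z hz
  obtain ⟨e, t, ht, hzt⟩ := M.cover z
  exact ⟨e, ⟨t, ht, hzt⟩, hz e ⟨t, ht, hzt⟩⟩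

end MetricGraphStruct

namespace ReebGraphOf

variable {X : Type*} [MetricSpace X] {r : X} {G : Type*} [MetricSpace G] (R : ReebGraphOf X r G)

theorem dStar_nonneg (p : G) : 0 ≤ R.dStar p := by
  obtain ⟨x, rfl⟩ := R.surj p
  exact (R.dStar_π x).symm ▸ dist_nonneg

theorem abs_dStar_sub_le_dist (p q : G) : |R.dStar p - R.dStar q| ≤ dist p q :=
  R.graph.dist_maximal (fun u v => |R.dStar u - R.dStar v|) (fun _ => by simp)
    (fun _ _ => abs_sub_comm _ _) (fun _ _ _ => abs_sub_le _ _ _)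
    (fun e s hs t ht => by rw [R.dStar_param e s hs, R.dStar_param e t ht, add_sub_add_left_eq_sub])
    p q

theorem dist_mem_and_apply_eq_of_π_mem_image {δ : ℝ → G} {S : Set ℝ}
    (hδ : ∀ t ∈ S, R.dStar (δ t) = t) {x : X} (hx : R.π x ∈ δ '' S) :
    dist r x ∈ S ∧ δ (dist r x) = R.π x := by
  obtain ⟨t, ht, hδt⟩ := hx
  have hxt : dist r x = t := by rw [← R.dStar_π, ← hδt, hδ t ht]
  exact hxt ▸ ⟨ht, hδt⟩

theorem eventually_exists_edge_below (q : G) :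
    ∀ᶠ z in 𝓝 q, R.dStar z < R.dStar q → ∃ e s u, 0 ≤ s ∧ s < u ∧ u ≤ R.graph.len e ∧
      R.graph.param e s = z ∧ R.graph.param e u = q ∧ R.dStar q - R.dStar z = u - s := by
  filter_upwards [R.graph.eventually_exists_edge_through q]
    with z ⟨e, ⟨s, hs, hz⟩, ⟨u, hu, hq⟩⟩ hlt
  have hdiff : R.dStar q - R.dStar z = u - s := by
    rw [← hz, ← hq, R.dStar_param e u hu, R.dStar_param e s hs, add_sub_add_left_eq_sub]
  exact ⟨e, s, u, hs.1, by linarith, hu.2, hz, hq, hdiff⟩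

theorem eventually_dist_le_dStar_sub (q : G) :
    ∀ᶠ z in 𝓝 q, R.dStar z < R.dStar q → dist z q ≤ R.dStar q - R.dStar z := by
  filter_upwards [R.eventually_exists_edge_below q] with z hz hlt
  obtain ⟨e, s, u, hs, hsu, hu, hz, hq, hdiff⟩ := hz hlt
  rw [hdiff, ← hz, ← hq]
  calc dist (R.graph.param e s) (R.graph.param e u) ≤ dist s u := by
        simpa using (R.graph.param_lipschitz e).dist_le_mul s ⟨hs, by linarith⟩ u ⟨by linarith, hu⟩
    _ = u - s := by rw [Real.dist_eq, abs_sub_comm, abs_of_pos (sub_pos.2 hsu)]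

theorem edge_eq_of_not_isMergingVertex {q : G} (hq : ¬ R.IsMergingVertex q)
    {e e' : R.graph.E} {u u' : ℝ} (hu : u ∈ Ioc 0 (R.graph.len e))
    (hu' : u' ∈ Ioc 0 (R.graph.len e')) (he : R.graph.param e u = q)
    (he' : R.graph.param e' u' = q) : e = e' := by
  by_contra hne
  rcases hu.2.lt_or_eq with hlt | rfl <;> rcases hu'.2.lt_or_eq with hlt' | rfl
  · exact R.graph.disjoint_interiors e e' hne u ⟨hu.1, hlt⟩ u' ⟨hu'.1, hlt'⟩ (he.trans he'.symm)
  · exact (R.graph.endpoint_not_interior e' e u ⟨hu.1, hlt⟩).2 (he'.trans he.symm)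
  · exact (R.graph.endpoint_not_interior e e' u' ⟨hu'.1, hlt'⟩).2 (he.trans he'.symm)
  · exact hq ⟨e, e', hne, he, he'⟩

theorem eventually_eq_of_dStar_eq {q : G} (hq : ¬ R.IsMergingVertex q) :
    ∀ᶠ zw in 𝓝 (q, q), R.dStar zw.1 < R.dStar q → R.dStar zw.2 = R.dStar zw.1 → zw.1 = zw.2 := by
  filter_upwards [(R.eventually_exists_edge_below q).prod_nhds (R.eventually_exists_edge_below q)]
    with ⟨z, w⟩ ⟨hz, hw⟩ hlt heq
  obtain ⟨e, s, u, hs, hsu, hu, hz, hqe, -⟩ := hz hlt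
  obtain ⟨e', s', u', hs', hsu', hu', hw, hqe', -⟩ := hw (heq ▸ hlt)
  obtain rfl := R.edge_eq_of_not_isMergingVertex hq ⟨hs.trans_lt hsu, hu⟩
    ⟨hs'.trans_lt hsu', hu'⟩ hqe hqe'
  have hss' : s = s' := by
    have := heq
    rw [← hz, ← hw, R.dStar_param e s ⟨hs, by linarith⟩, R.dStar_param e s' ⟨hs', by linarith⟩]
      at this
    linarith
  rw [← hz, ← hw, hss']

/-- The paper's `d_*`-increasing path, parametrized by the values of `d_*`. -/
def IsIncreasingPath (δ : ℝ → G) (a b : ℝ) : Prop :=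
  ContinuousOn δ (Icc a b) ∧ ∀ t ∈ Icc a b, R.dStar (δ t) = t

theorem isIncreasingPath_π_comp {σ : ℝ → X} {a b : ℝ} (ha : 0 ≤ a) (hσ0 : σ 0 = r)
    (hσ : ∀ s ∈ Icc 0 b, ∀ t ∈ Icc 0 b, dist (σ s) (σ t) = |s - t|) :
    R.IsIncreasingPath (R.π ∘ σ) a b := by
  have hsub : Icc a b ⊆ Icc 0 b := Icc_subset_Icc_left ha
  refine ⟨R.continuous_π.comp_continuousOn
    ((LipschitzOnWith.of_dist_le_mul (K := 1) fun s hs t ht => ?_).continuousOn.mono hsub),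
    fun t ht => ?_⟩
  · simp [hσ s hs t ht, Real.dist_eq]
  · have h0 : (0 : ℝ) ∈ Icc 0 b := ⟨le_rfl, ha.trans (ht.1.trans ht.2)⟩
    rw [Function.comp_apply, R.dStar_π, ← hσ0, hσ 0 h0 t (hsub ht), zero_sub, abs_neg,
      abs_of_nonneg (ha.trans ht.1)]

namespace IsIncreasingPath

variable {R} {δ η : ℝ → G} {a b : ℝ}

theorem mono_right (hδ : R.IsIncreasingPath δ a b) {c : ℝ} (hc : c ≤ b) :
    R.IsIncreasingPath δ a c :=
  ⟨hδ.1.mono (Icc_subset_Icc_right hc), fun t ht => hδ.2 t ⟨ht.1, ht.2.trans hc⟩⟩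

theorem tendsto_nhdsLT (hδ : R.IsIncreasingPath δ a b) {t : ℝ} (ht : t ∈ Ioc a b) :
    Tendsto δ (𝓝[<] t) (𝓝 (δ t)) := by
  refine (hδ.1 t (Ioc_subset_Icc_self ht)).tendsto.mono_left ?_
  rw [← nhdsWithin_Ioo_eq_nhdsLT ht.1]
  exact nhdsWithin_mono _ (Ioo_subset_Icc_self.trans (Icc_subset_Icc_right ht.2))

theorem eqOn (hδ : R.IsIncreasingPath δ a b) (hη : R.IsIncreasingPath η a b) (hb : η b = δ b)
    (hnm : ∀ t ∈ Ioc a b, ¬ R.IsMergingVertex (δ t)) : EqOn η δ (Icc a b) := by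
  refine IsClosed.Icc_subset_of_forall_mem_nhdsLT (s := {t | η t = δ t}) ?_ hb
    fun t ⟨ht, hta⟩ => ?_
  · rw [inter_comm]
    exact isClosed_Icc.isClosed_eq hη.1 hδ.1
  · have hlim := (hη.tendsto_nhdsLT hta).prodMk_nhds (hδ.tendsto_nhdsLT hta)
    rw [show η t = δ t from ht] at hlim
    filter_upwards [hlim.eventually (R.eventually_eq_of_dStar_eq (hnm t hta)),
      Ioo_mem_nhdsLT hta.1] with u hu hau
    have hu' : u ∈ Icc a b := ⟨hau.1.le, hau.2.le.trans hta.2⟩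
    exact hu (by rw [hη.2 u hu', hδ.2 t (Ioc_subset_Icc_self hta)]; exact hau.2)
      (by rw [hδ.2 u hu', hη.2 u hu'])

theorem dist_le (hδ : R.IsIncreasingPath δ a b) : ∀ t ∈ Icc a b, dist (δ t) (δ b) ≤ b - t := by
  refine IsClosed.Icc_subset_of_forall_mem_nhdsLT (s := {t | dist (δ t) (δ b) ≤ b - t}) ?_
    (by simp) fun t ⟨ht, hta⟩ => ?_
  · rw [inter_comm]
    exact isClosed_Icc.isClosed_le
      (continuous_dist.comp_continuousOn (hδ.1.prodMk continuousOn_const))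
      (continuousOn_const.sub continuousOn_id)
  · filter_upwards [(hδ.tendsto_nhdsLT hta).eventually (R.eventually_dist_le_dStar_sub (δ t)),
      Ioo_mem_nhdsLT hta.1] with u hu hau
    have hu' : u ∈ Icc a b := ⟨hau.1.le, hau.2.le.trans hta.2⟩
    have hδt := hδ.2 t (Ioc_subset_Icc_self hta)
    have hdu := hu (by rw [hδ.2 u hu', hδt]; exact hau.2)
    rw [hδ.2 u hu', hδt] at hdu
    calc dist (δ u) (δ b) ≤ dist (δ u) (δ t) + dist (δ t) (δ b) := dist_triangle _ _ _
      _ ≤ (t - u) + (b - t) := add_le_add hdu ht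
      _ = b - u := by ring

theorem dist_eq (hδ : R.IsIncreasingPath δ a b) (hab : a ≤ b) : dist (δ a) (δ b) = b - a := by
  have hlow := R.abs_dStar_sub_le_dist (δ a) (δ b)
  rw [hδ.2 a ⟨le_rfl, hab⟩, hδ.2 b ⟨hab, le_rfl⟩, abs_sub_comm,
    abs_of_nonneg (sub_nonneg.2 hab)] at hlow
  exact (hδ.dist_le a ⟨le_rfl, hab⟩).antisymm hlow

theorem π_comp_eqOn_of_geodesic (hδ : R.IsIncreasingPath δ a b) (ha : 0 ≤ a)
    (hnm : ∀ t ∈ Ioo a b, ¬ R.IsMergingVertex (δ t)) {y : X} (hy : R.π y ∈ δ '' Ioo a b)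
    {σ : ℝ → X} (hσ0 : σ 0 = r) (hσy : σ (dist r y) = y)
    (hσ : ∀ s ∈ Icc 0 (dist r y), ∀ t ∈ Icc 0 (dist r y), dist (σ s) (σ t) = |s - t|) :
    EqOn (R.π ∘ σ) δ (Icc a (dist r y)) := by
  obtain ⟨hyab, hδy⟩ :=
    R.dist_mem_and_apply_eq_of_π_mem_image (fun t ht => hδ.2 t (Ioo_subset_Icc_self ht)) hy
  exact (hδ.mono_right hyab.2.le).eqOn (R.isIncreasingPath_π_comp ha hσ0 hσ)
    (by simp [hσy, hδy]) fun t ht => hnm t ⟨ht.1, ht.2.trans_lt hyab.2⟩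

end IsIncreasingPath

end ReebGraphOf

theorem lift_increasing_path_reeb_general {X : Type*} [MetricSpace X] [CompactSpace X]
    (hX : IsGeodesicSpace X) (r : X)
    {G : Type*} [MetricSpace G] (R : ReebGraphOf X r G)
    (p p' : G)
    (δ : ℝ → G) (hδc : ContinuousOn δ (Set.Icc (R.dStar p) (R.dStar p')))
    (hδp : δ (R.dStar p) = p) (hδp' : δ (R.dStar p') = p')
    (hδinc : ∀ t ∈ Set.Icc (R.dStar p) (R.dStar p'), R.dStar (δ t) = t)
    (hnomerge : ∀ t ∈ Set.Ioo (R.dStar p) (R.dStar p'), ¬ R.IsMergingVertex (δ t))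
    (x' : X) (hx'p : R.π x' = p')
    (hx'cl : x' ∈ closure (R.π ⁻¹' (δ '' Set.Ioo (R.dStar p) (R.dStar p')))) :
    ∃ x : X, R.π x = p ∧
      dist x x' = dist r x' - dist r x ∧
      dist x x' = dist p p' ∧
      ∃ γ : ℝ → X, γ (R.dStar p) = x ∧ γ (R.dStar p') = x' ∧
        (∀ s ∈ Set.Icc (R.dStar p) (R.dStar p'), ∀ t ∈ Set.Icc (R.dStar p) (R.dStar p'),
          dist (γ s) (γ t) = |s - t|) ∧
        ∀ t ∈ Set.Icc (R.dStar p) (R.dStar p'), R.π (γ t) = δ t := by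
  set a := R.dStar p
  set b := R.dStar p'
  have ha := R.dStar_nonneg p
  have hab : a < b := by
    by_contra! hba
    simp [Ioo_eq_empty hba.not_gt] at hx'cl
  have hδ : R.IsIncreasingPath δ a b := ⟨hδc, hδinc⟩
  obtain ⟨xs, hxs, hlim⟩ := mem_closure_iff_seq_limit.1 hx'cl
  have hxs' n :=
    R.dist_mem_and_apply_eq_of_π_mem_image (fun t ht => hδinc t (Ioo_subset_Icc_self ht)) (hxs n)
  have hℓ : Tendsto (fun n => dist r (xs n)) atTop (𝓝 b) := by
    simpa [← R.dStar_π, hx'p] using (tendsto_const_nhds (x := r)).dist hlim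
  choose σ hσ0 hσ1 hσ using fun n => hX r (xs n)
  have hproj n := hδ.π_comp_eqOn_of_geodesic ha hnomerge (hxs n) (hσ0 n) (hσ1 n) (hσ n)
  obtain ⟨γ, hγb, hγ, hγC⟩ := exists_limit_of_isometric_segments (fun _ => dist_nonneg)
    (fun n => (hxs' n).1.2.le) hℓ hσ (by simpa [hσ1] using hlim)
  have hγδ : ∀ t ∈ Icc a b, R.π (γ t) = δ t := fun t ht => by
    rcases ht.2.eq_or_lt with htb | htb
    · rw [htb, hγb, hx'p, hδp']
    · exact hγC t ⟨ha.trans ht.1, htb⟩ _ (isClosed_singleton.preimage R.continuous_π)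
        ((hℓ.eventually (lt_mem_nhds htb)).mono fun n hn => hproj n ⟨ht.1, hn.le⟩)
  have hsub : Icc a b ⊆ Icc 0 b := Icc_subset_Icc_left ha
  have hdist : dist (γ a) x' = b - a := by
    rw [← hγb, hγ a (hsub ⟨le_rfl, hab.le⟩) b (hsub ⟨hab.le, le_rfl⟩), abs_sub_comm,
      abs_of_pos (sub_pos.2 hab)]
  refine ⟨γ a, by rw [hγδ a ⟨le_rfl, hab.le⟩, hδp], ?_, ?_, γ, rfl, hγb,
    fun s hs t ht => hγ s (hsub hs) t (hsub ht), hγδ⟩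
  · rw [hdist, ← R.dStar_π, ← R.dStar_π, hx'p, hγδ a ⟨le_rfl, hab.le⟩, hδp]
  · rw [hdist, ← hδ.dist_eq hab.le, hδp, hδp']

/-- Lifting of monotone paths in the Reeb graph: if `δ` is a `d_*`-strictly increasing
path in the metric Reeb graph `G` from `p` to `p'` (parametrized by the values of `d_*`)
whose interior contains no merging vertex, then for any `x' ∈ π⁻¹(p')` lying in the
closure of `π⁻¹(δ((d_*(p), d_*(p'))))` there is a shortest path `γ` in `X` from some
`x ∈ π⁻¹(p)` to `x'` with `π ∘ γ = δ` and
`d_X(x,x') = d(x') - d(x) = d_G(p,p')`. -/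
theorem lift_increasing_path_reeb {X : Type*} [MetricSpace X] [CompactSpace X]
    [ConnectedSpace X] (hX : IsGeodesicSpace X) (r : X)
    {G : Type*} [MetricSpace G] (R : ReebGraphOf X r G)
    (p p' : G) (hpp' : R.dStar p ≤ R.dStar p')
    (δ : ℝ → G) (hδc : ContinuousOn δ (Set.Icc (R.dStar p) (R.dStar p')))
    (hδp : δ (R.dStar p) = p) (hδp' : δ (R.dStar p') = p')
    (hδinc : ∀ t ∈ Set.Icc (R.dStar p) (R.dStar p'), R.dStar (δ t) = t)
    (hnomerge : ∀ t ∈ Set.Ioo (R.dStar p) (R.dStar p'), ¬ R.IsMergingVertex (δ t))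
    (x' : X) (hx'p : R.π x' = p')
    (hx'cl : x' ∈ closure (R.π ⁻¹' (δ '' Set.Ioo (R.dStar p) (R.dStar p')))) :
    ∃ x : X, R.π x = p ∧
      dist x x' = dist r x' - dist r x ∧
      dist x x' = dist p p' ∧
      ∃ γ : ℝ → X, γ (R.dStar p) = x ∧ γ (R.dStar p') = x' ∧
        (∀ s ∈ Set.Icc (R.dStar p) (R.dStar p'), ∀ t ∈ Set.Icc (R.dStar p) (R.dStar p'),
          dist (γ s) (γ t) = |s - t|) ∧
        ∀ t ∈ Set.Icc (R.dStar p) (R.dStar p'), R.π (γ t) = δ t :=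
  lift_increasing_path_reeb_general hX r R p p' δ hδc hδp hδp' hδinc hnomerge x' hx'p hx'cl
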